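/- arXiv:1910.02008 — 2 statements merged into one kernel-verified Lean document; each statement's English description precedes it below -/
import Mathlib

section
/- Let $U:\mathbb{R}^d\to\mathbb{R}$ be continuously differentiable with gradient $h=\nabla U$ satisfying the dissipativity condition $\langle h(\theta),\theta\rangle\ge a|\theta|^2-b$ for constants $a,b>0$. Define $V_p(\theta)=(1+|\theta|^2)^{p/2}$ for $p\ge 2$ and fix $\beta>0$. Then for all $\theta\in\mathbb{R}^d$: $\frac{\Delta V_p(\theta)}{\beta}-\langle h(\theta),\nabla V_p(\theta)\rangle\le -\bar c(p)V_p(\theta)+\tilde c(p)$, where $\bar c(p)=ap/4$, $\tilde c(p)=(3/4)ap(1+\overline M_p^2)^{p/2}$ and $\overline M_p=(1/3+4b/(3a)+4d/(3a\beta)+4(p-2)/(3a\beta))^{1/2}$. -/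
/-! With `t = 1 + ‖θ‖²`, the Laplacian term is at most `p t^(p/2-1) (d + p - 2) / β` and, by
dissipativity, the gradient term is at most `-p t^(p/2-1) (a t - a - b)`. Their sum is
`-(a p / 4) t^(p/2) + (3 a p / 4) t^(p/2-1) (1 + M² - t)`, since `a + b + (d + p - 2) / β` is
exactly `(3 a / 4) (1 + M²)`, and `t^(p/2-1) (K - t) ≤ K^(p/2)` for `K = 1 + M²`. -/

open scoped RealInnerProductSpace

lemma Real.rpow_mul_sub_le_rpow_add_one {q t K : ℝ} (hq : 0 ≤ q) (ht : 0 ≤ t) (hK : 0 ≤ K) :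
    t ^ q * (K - t) ≤ K ^ (q + 1) := by
  rw [Real.rpow_add_one' hK (by linarith)]
  rcases le_or_gt t K with htK | hKt
  · exact mul_le_mul (Real.rpow_le_rpow ht htK hq) (by linarith) (by linarith) (by positivity)
  · exact (mul_nonpos_of_nonneg_of_nonpos (by positivity) (by linarith)).trans (by positivity)

lemma lyapunov_drift_le {a b β p d s I : ℝ} (ha : 0 < a) (hb : 0 < b) (hβ : 0 < β)
    (hp : 2 ≤ p) (hd : 0 ≤ d) (hs : 0 ≤ s) (hI : a * s - b ≤ I) :
    (p * (1 + s) ^ (p / 2 - 2) * (d * (1 + s) + (p - 2) * s)) / β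
        - p * (1 + s) ^ (p / 2 - 1) * I
      ≤ -(a * p / 4) * (1 + s) ^ (p / 2)
        + (3 / 4) * a * p *
          (1 + (1 / 3 + 4 * b / (3 * a) + 4 * d / (3 * a * β) + 4 * (p - 2) / (3 * a * β)))
            ^ (p / 2) := by
  set t := 1 + s with ht
  set K := 1 + (1 / 3 + 4 * b / (3 * a) + 4 * d / (3 * a * β) + 4 * (p - 2) / (3 * a * β))
    with hK
  have ht0 : 0 < t := by positivity
  have hp2 : 0 ≤ p - 2 := by linarith
  have hK0 : 0 ≤ K := by positivity
  have hKC : a + b + (d + p - 2) / β = 3 * a / 4 * K := by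
    rw [hK]; field_simp; ring
  have hpow₁ : t ^ (p / 2 - 2) * t = t ^ (p / 2 - 1) := by
    rw [← Real.rpow_add_one ht0.ne']; ring_nf
  have hpow₂ : t ^ (p / 2 - 1) * t = t ^ (p / 2) := by
    rw [← Real.rpow_add_one ht0.ne']; ring_nf
  have hlaplacian : (p * t ^ (p / 2 - 2) * (d * t + (p - 2) * s)) / β
      ≤ p * t ^ (p / 2 - 1) * ((d + p - 2) / β) := by
    rw [div_le_iff₀ hβ, mul_assoc _ ((d + p - 2) / β), div_mul_cancel₀ _ hβ.ne', ← hpow₁]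
    have : d * t + (p - 2) * s ≤ (d + p - 2) * t := by nlinarith
    calc p * t ^ (p / 2 - 2) * (d * t + (p - 2) * s)
        ≤ p * t ^ (p / 2 - 2) * ((d + p - 2) * t) := by gcongr
      _ = p * (t ^ (p / 2 - 2) * t) * (d + p - 2) := by ring
  have hgradient : -(p * t ^ (p / 2 - 1) * I) ≤ -(p * t ^ (p / 2 - 1) * (a * s - b)) := by
    gcongr
  have htail : t ^ (p / 2 - 1) * (K - t) ≤ K ^ (p / 2) := by
    simpa using Real.rpow_mul_sub_le_rpow_add_one (q := p / 2 - 1) (by linarith) ht0.le hK0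
  calc (p * t ^ (p / 2 - 2) * (d * t + (p - 2) * s)) / β - p * t ^ (p / 2 - 1) * I
      ≤ p * t ^ (p / 2 - 1) * (a + b + (d + p - 2) / β - a * t) := by
        rw [ht] at hgradient ⊢; linarith
    _ = -(a * p / 4) * t ^ (p / 2) + 3 / 4 * a * p * (t ^ (p / 2 - 1) * (K - t)) := by
        rw [hKC, ← hpow₂]; ring
    _ ≤ -(a * p / 4) * t ^ (p / 2) + 3 / 4 * a * p * K ^ (p / 2) := by gcongr

theorem stmt_3_general {d : ℕ}
    (h : EuclideanSpace ℝ (Fin d) → EuclideanSpace ℝ (Fin d))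
    (a b β : ℝ) (ha : 0 < a) (hb : 0 < b) (hβ : 0 < β)
    (hdiss : ∀ θ, ⟪h θ, θ⟫ ≥ a * ‖θ‖ ^ 2 - b)
    (p : ℝ) (hp : 2 ≤ p) :
    ∀ θ : EuclideanSpace ℝ (Fin d),
      (p * (1 + ‖θ‖ ^ 2) ^ (p / 2 - 2) * (d * (1 + ‖θ‖ ^ 2) + (p - 2) * ‖θ‖ ^ 2)) / β
        - ⟪h θ, (p * (1 + ‖θ‖ ^ 2) ^ (p / 2 - 1)) • θ⟫
      ≤ -(a * p / 4) * (1 + ‖θ‖ ^ 2) ^ (p / 2)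
        + (3 / 4) * a * p *
          (1 + (Real.sqrt (1 / 3 + 4 * b / (3 * a) + 4 * d / (3 * a * β)
            + 4 * (p - 2) / (3 * a * β))) ^ 2) ^ (p / 2) := by
  intro θ
  have hp2 : 0 ≤ p - 2 := by linarith
  rw [real_inner_smul_right, Real.sq_sqrt (by positivity)]
  exact lyapunov_drift_le ha hb hβ hp d.cast_nonneg (sq_nonneg _) (hdiss θ)

theorem stmt_3 {d : ℕ}
    (U : EuclideanSpace ℝ (Fin d) → ℝ)
    (h : EuclideanSpace ℝ (Fin d) → EuclideanSpace ℝ (Fin d))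
    (hgrad : ∀ θ, HasGradientAt U (h θ) θ) (hcont : Continuous h)
    (a b β : ℝ) (ha : 0 < a) (hb : 0 < b) (hβ : 0 < β)
    (hdiss : ∀ θ, ⟪h θ, θ⟫ ≥ a * ‖θ‖ ^ 2 - b)
    (p : ℝ) (hp : 2 ≤ p) :
    ∀ θ : EuclideanSpace ℝ (Fin d),
      (p * (1 + ‖θ‖ ^ 2) ^ (p / 2 - 2) * (d * (1 + ‖θ‖ ^ 2) + (p - 2) * ‖θ‖ ^ 2)) / β
        - ⟪h θ, (p * (1 + ‖θ‖ ^ 2) ^ (p / 2 - 1)) • θ⟫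
      ≤ -(a * p / 4) * (1 + ‖θ‖ ^ 2) ^ (p / 2)
        + (3 / 4) * a * p *
          (1 + (Real.sqrt (1 / 3 + 4 * b / (3 * a) + 4 * d / (3 * a * β)
            + 4 * (p - 2) / (3 * a * β))) ^ 2) ^ (p / 2) :=
  stmt_3_general h a b β ha hb hβ hdiss p hp
end

section
/- Define $H_i(\theta,\mathbf{Z}_i)=\frac{1}{n}\big(\theta-\hat a+\frac{2\hat a}{1+e^{2\hat a^{\mathsf T}\theta}}\big)+\frac{Z_i}{1+e^{-Z_i^{\mathsf T}\theta}}-Y_iZ_i$ for $\theta,Z_i,\hat a\in\mathbb{R}^d$, $Y_i\in\mathbb{R}$, and integer $n\ge 1$. Then for all $\theta$: $\langle\theta, H_i(\theta,\mathbf{Z}_i)\rangle\ge \frac{1}{4n}|\theta|^2-\frac{1}{2n}|\hat a|^2-2n\big(|\mathbf{Z}_i|^2+|\mathbf{Z}_i|^4\big)$, where $|\mathbf{Z}_i|^2=|Z_i|^2+Y_i^2$. -/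
/-!
Write `s = ⟪â, θ⟫` and `t = ⟪Z, θ⟫`. The prior part of `⟪θ, Hᵢ θ⟫` is
`(‖θ‖² + (2σ(-2s) - 1) s) / n` with `|2σ(-2s) - 1| ≤ 1`, hence at least `(‖θ‖² - ‖â‖²) / (2n)`
by Cauchy–Schwarz and AM-GM. The likelihood part is `(σ(t) - Y) t`, and Young's inequality
trades it for `-‖θ‖² / (4n) - n (σ(t) - Y)² ‖Z‖²`, where `(σ(t) - Y)² ≤ 2 (1 + Y²)` because
`σ` takes values in `[0, 1]`.
-/

open scoped RealInnerProductSpace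

open Real

section InnerBounds

variable {E : Type*} [NormedAddCommGroup E] [InnerProductSpace ℝ E]

lemma half_sub_half_le_norm_sq_add_mul_inner (a θ : E) {c : ℝ} (hc : |c| ≤ 1) :
    ‖θ‖ ^ 2 / 2 - ‖a‖ ^ 2 / 2 ≤ ‖θ‖ ^ 2 + c * ⟪a, θ⟫ := by
  have hcs : |c * ⟪a, θ⟫| ≤ ‖a‖ * ‖θ‖ := by
    rw [abs_mul]
    exact (mul_le_of_le_one_left (abs_nonneg _) hc).trans (abs_real_inner_le_norm a θ)
  nlinarith [neg_abs_le (c * ⟪a, θ⟫), sq_nonneg (‖a‖ - ‖θ‖)]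

lemma neg_le_mul_inner (c : ℝ) (x θ : E) {m : ℝ} (hm : 0 < m) :
    -(‖θ‖ ^ 2 / (4 * m) + m * (c ^ 2 * ‖x‖ ^ 2)) ≤ c * ⟪x, θ⟫ := by
  have hcs : |c * ⟪x, θ⟫| ≤ |c| * ‖x‖ * ‖θ‖ := by
    rw [abs_mul, mul_assoc]
    exact mul_le_mul_of_nonneg_left (abs_real_inner_le_norm x θ) (abs_nonneg c)
  have young : |c| * ‖x‖ * ‖θ‖ ≤ ‖θ‖ ^ 2 / (4 * m) + m * (c ^ 2 * ‖x‖ ^ 2) := by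
    rw [← sq_abs c, div_add' _ _ _ (by positivity), le_div_iff₀ (by positivity)]
    nlinarith [sq_nonneg (‖θ‖ - 2 * m * (|c| * ‖x‖))]
  linarith [neg_abs_le (c * ⟪x, θ⟫)]

end InnerBounds

lemma abs_two_mul_sigmoid_sub_one_le (x : ℝ) : |2 * sigmoid x - 1| ≤ 1 := by
  rw [abs_le]
  constructor <;> linarith [sigmoid_nonneg x, sigmoid_le_one x]

lemma sq_sigmoid_sub_le (x Y : ℝ) : (sigmoid x - Y) ^ 2 ≤ 2 * (1 + Y ^ 2) := by
  nlinarith [sigmoid_nonneg x, sigmoid_le_one x, sq_nonneg (sigmoid x + Y)]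

lemma one_add_sq_mul_le (z Y : ℝ) :
    (1 + Y ^ 2) * z ≤ (z + Y ^ 2) + (z + Y ^ 2) ^ 2 := by
  nlinarith [sq_nonneg z, sq_nonneg (Y ^ 2)]

theorem stmt_9 {d : ℕ} (n : ℕ) (hn : 1 ≤ n)
    (ahat Z : EuclideanSpace ℝ (Fin d)) (Y : ℝ)
    (Hi : EuclideanSpace ℝ (Fin d) → EuclideanSpace ℝ (Fin d))
    (hHi : ∀ θ, Hi θ = (1 / (n : ℝ)) • (θ - ahat + (2 / (1 + Real.exp (2 * ⟪ahat, θ⟫))) • ahat)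
      + (1 / (1 + Real.exp (-⟪Z, θ⟫))) • Z - Y • Z) :
    ∀ θ, ⟪θ, Hi θ⟫ ≥ (1 / (4 * (n : ℝ))) * ‖θ‖ ^ 2 - (1 / (2 * (n : ℝ))) * ‖ahat‖ ^ 2
      - 2 * (n : ℝ) * ((‖Z‖ ^ 2 + Y ^ 2) + (‖Z‖ ^ 2 + Y ^ 2) ^ 2) := by
  intro θ
  have hn0 : (0 : ℝ) < n := by exact_mod_cast hn
  set c := 2 * sigmoid (-(2 * ⟪ahat, θ⟫)) - 1
  set σ := sigmoid ⟪Z, θ⟫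
  have hinner : ⟪θ, Hi θ⟫ = (1 / (n : ℝ)) * (‖θ‖ ^ 2 + c * ⟪ahat, θ⟫) + (σ - Y) * ⟪Z, θ⟫ := by
    simp only [hHi, c, σ, sigmoid_def, neg_neg, inner_add_right, inner_sub_right,
      inner_smul_right, real_inner_self_eq_norm_sq, real_inner_comm θ]
    ring
  have prior := mul_le_mul_of_nonneg_left
    (half_sub_half_le_norm_sq_add_mul_inner ahat θ
      (abs_two_mul_sigmoid_sub_one_le (-(2 * ⟪ahat, θ⟫)))) (one_div_nonneg.mpr hn0.le)
  have likelihood := neg_le_mul_inner (σ - Y) Z θ hn0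
  have hσ : (σ - Y) ^ 2 * ‖Z‖ ^ 2 ≤ 2 * ((‖Z‖ ^ 2 + Y ^ 2) + (‖Z‖ ^ 2 + Y ^ 2) ^ 2) := by
    calc (σ - Y) ^ 2 * ‖Z‖ ^ 2 ≤ 2 * ((1 + Y ^ 2) * ‖Z‖ ^ 2) := by
          rw [← mul_assoc]; gcongr; exact sq_sigmoid_sub_le _ _
      _ ≤ _ := by gcongr; exact one_add_sq_mul_le _ _
  have hlik := mul_le_mul_of_nonneg_left hσ hn0.le
  rw [hinner, ge_iff_le]
  calc _ = (1 / (n : ℝ)) * (‖θ‖ ^ 2 / 2 - ‖ahat‖ ^ 2 / 2) - (‖θ‖ ^ 2 / (4 * n)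
          + n * (2 * ((‖Z‖ ^ 2 + Y ^ 2) + (‖Z‖ ^ 2 + Y ^ 2) ^ 2))) := by field_simp; ring
    _ ≤ _ := by linarith
end
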